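/- (Bounded Correction) Let K_p, K_i, K_d ≥ 0 with K_p + T_max·K_i + 2·K_d ≤ 1 − γ for some γ ∈ (0,1) and natural number T_max. Let e : ℕ → ℝ satisfy |e_j| ≤ 1 for all j, define u_t = K_p·e_t + K_i·∑_{j=0}^{t} e_j + K_d·(e_t − e_{t−1}) for t with t + 1 ≤ T_max, and let β satisfy β_{t+1} = γ·β_t + u_t with |β_0| ≤ 1. Then |u_t| ≤ 1 − γ for all such t, and |β_t| ≤ 1 for all t ≤ T_max; in particular the correction signal remains bounded and the β dynamics stay within the linear (unclipped) regime. -/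

import Mathlib

/-!
Each term of the PID signal is bounded using `|e j| ≤ 1`: the proportional term by `K_p`, the
integral term by `(t + 1)·K_i ≤ T_max·K_i` and the derivative term by `2·K_d`, so the gain
condition gives `|u_t| ≤ 1 − γ`. Then `|β_{t+1}| ≤ γ·|β_t| + (1 − γ)`, and the interval
`[−1, 1]` is invariant under the dial update.
-/

open Finset

/-- The PID correction at round `t`; for `t = 0` the derivative term reads `e 0 - e 0 = 0`. -/
def pidSignal (Kp Ki Kd : ℝ) (e : ℕ → ℝ) (t : ℕ) : ℝ :=
  Kp * e t + Ki * (∑ j ∈ range (t + 1), e j) + Kd * (e t - e (t - 1))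

theorem abs_sum_range_le_of_abs_le_one {e : ℕ → ℝ} (he : ∀ j, |e j| ≤ 1) (n : ℕ) :
    |∑ j ∈ range n, e j| ≤ n := by
  calc |∑ j ∈ range n, e j| ≤ ∑ j ∈ range n, |e j| := abs_sum_le_sum_abs _ _
    _ ≤ ∑ _j ∈ range n, (1 : ℝ) := sum_le_sum fun j _ => he j
    _ = n := by simp

theorem abs_pidSignal_le {Kp Ki Kd : ℝ} (hKp : 0 ≤ Kp) (hKi : 0 ≤ Ki) (hKd : 0 ≤ Kd)
    {e : ℕ → ℝ} (he : ∀ j, |e j| ≤ 1) (t : ℕ) :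
    |pidSignal Kp Ki Kd e t| ≤ Kp + (t + 1) * Ki + 2 * Kd := by
  have hsum : |∑ j ∈ range (t + 1), e j| ≤ t + 1 := by
    exact_mod_cast abs_sum_range_le_of_abs_le_one he (t + 1)
  have hdiff : |e t - e (t - 1)| ≤ 2 := by
    linarith [abs_sub (e t) (e (t - 1)), he t, he (t - 1)]
  calc |pidSignal Kp Ki Kd e t|
      ≤ |Kp * e t| + |Ki * ∑ j ∈ range (t + 1), e j| + |Kd * (e t - e (t - 1))| :=
        abs_add_three _ _ _
    _ = Kp * |e t| + Ki * |∑ j ∈ range (t + 1), e j| + Kd * |e t - e (t - 1)| := by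
        simp only [abs_mul, abs_of_nonneg hKp, abs_of_nonneg hKi, abs_of_nonneg hKd]
    _ ≤ Kp * 1 + Ki * (t + 1) + Kd * 2 := by gcongr; exact he t
    _ = Kp + (t + 1) * Ki + 2 * Kd := by ring

theorem abs_le_of_contractive_recurrence {γ M : ℝ} (hγ : 0 ≤ γ) {β u : ℕ → ℝ} {T : ℕ}
    (hβ : ∀ t, β (t + 1) = γ * β t + u t) (hβ0 : |β 0| ≤ M)
    (hu : ∀ t, t + 1 ≤ T → |u t| ≤ (1 - γ) * M) :
    ∀ t, t ≤ T → |β t| ≤ M := by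
  intro t
  induction t with
  | zero => exact fun _ => hβ0
  | succ n ih =>
    intro hn
    calc |β (n + 1)| ≤ |γ * β n| + |u n| := hβ n ▸ abs_add_le _ _
      _ = γ * |β n| + |u n| := by rw [abs_mul, abs_of_nonneg hγ]
      _ ≤ γ * M + (1 - γ) * M := by gcongr; exacts [ih (by omega), hu n hn]
      _ = M := by ring

/-- (Bounded Correction) Under the gain condition `K_p + T_max·K_i + 2·K_d ≤ 1 − γ`, the
PID correction signal computed from a normalized error sequence stays within the
contractive margin `1 − γ`, and the behavior-dial dynamics `β_{t+1} = γ·β_t + u_t`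
remain in `[−1,1]` up to round `T_max` (the clip is never active). -/
theorem bounded_correction (Kp Ki Kd γ : ℝ) (Tmax : ℕ)
    (hKp : 0 ≤ Kp) (hKi : 0 ≤ Ki) (hKd : 0 ≤ Kd)
    (hγ : γ ∈ Set.Ioo (0 : ℝ) 1)
    (hgain : Kp + (Tmax : ℝ) * Ki + 2 * Kd ≤ 1 - γ)
    (e : ℕ → ℝ) (he : ∀ j, |e j| ≤ 1)
    (u : ℕ → ℝ)
    (hu : ∀ t, t + 1 ≤ Tmax →
      u t = Kp * e t + Ki * (∑ j ∈ Finset.range (t + 1), e j) + Kd * (e t - e (t - 1)))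
    (β : ℕ → ℝ) (hβ : ∀ t, β (t + 1) = γ * β t + u t) (hβ0 : |β 0| ≤ 1) :
    (∀ t, t + 1 ≤ Tmax → |u t| ≤ 1 - γ) ∧ (∀ t, t ≤ Tmax → |β t| ≤ 1) := by
  have hu_bound : ∀ t, t + 1 ≤ Tmax → |u t| ≤ 1 - γ := by
    intro t ht
    have hT : (t + 1 : ℝ) ≤ Tmax := by exact_mod_cast ht
    rw [hu t ht]
    calc |pidSignal Kp Ki Kd e t| ≤ Kp + (t + 1) * Ki + 2 * Kd := abs_pidSignal_le hKp hKi hKd he t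
      _ ≤ Kp + Tmax * Ki + 2 * Kd := by gcongr
      _ ≤ 1 - γ := hgain
  refine ⟨hu_bound, abs_le_of_contractive_recurrence hγ.1.le hβ hβ0 fun t ht => ?_⟩
  simpa using hu_bound t ht
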